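/- Let m = 2h+1 ≥ 5 be odd, and define Φ on Σ = {(a,b) ∈ (Z/m)^2 : a+b ≠ 0} by: Φ(a,b) = (a', b+1) for 0 ≤ b ≤ m−2, where a' = a if a+b = h and a' = a+h otherwise; Φ(0, m−1) = (1, 0); and Φ(a, m−1) = (a, 0) for a ∉ {0,1}. Then Φ is a single cycle of length m(m−1) on Σ. -/
import Mathlib


/-- The induced first-return map `Φ` on `Σ = {(a,b) : a + b ≠ 0}`. -/
def Phi (h : ℕ) (p : ZMod (2 * h + 1) × ZMod (2 * h + 1)) :
    ZMod (2 * h + 1) × ZMod (2 * h + 1) :=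
  if p.2 = -1 then
    (if p.1 = 0 then (1, 0) else (p.1, 0))
  else
    (if p.1 + p.2 = (h : ZMod (2 * h + 1)) then p.1 else p.1 + (h : ZMod (2 * h + 1)), p.2 + 1)

section Aux

lemma hzz (h : ℕ) : 2 * (h : ZMod (2*h+1)) + 1 = 0 := by
  have := ZMod.natCast_self (2*h+1)
  push_cast at this
  linear_combination this

lemma two_mul_cancel (h : ℕ) {x y : ZMod (2*h+1)} (e : 2*x = 2*y) : x = y := by
  linear_combination ((h:ZMod (2*h+1))+1)*e + (y - x)*(hzz h)

lemma castInj (h : ℕ) {i j : ℕ} (hi : i < 2*h+1) (hj : j < 2*h+1)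
    (e : (i : ZMod (2*h+1)) = (j : ZMod (2*h+1))) : i = j := by
  have := congrArg ZMod.val e
  rwa [ZMod.val_cast_of_lt hi, ZMod.val_cast_of_lt hj] at this

lemma cast_ne_zero (h : ℕ) {j : ℕ} (h1 : 0 < j) (h2 : j < 2*h+1) :
    (j : ZMod (2*h+1)) ≠ 0 := by
  intro e
  rw [ZMod.natCast_eq_zero_iff] at e
  have := Nat.le_of_dvd h1 e
  omega

lemma neg_one_cast (h : ℕ) : ((2*h : ℕ) : ZMod (2*h+1)) = -1 := by
  push_cast
  linear_combination hzz h

lemma t_eq_zero (h : ℕ) {a : ZMod (2*h+1)}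
    (e : ((h:ZMod (2*h+1)) - a)*2 = -1) : a = 0 := by
  apply two_mul_cancel h
  linear_combination -e + hzz h

lemma t_val_lt (h : ℕ) {a : ZMod (2*h+1)} (ha : a ≠ 0) :
    (((h:ZMod (2*h+1)) - a)*2).val < 2*h := by
  have h2 := ZMod.val_lt (((h:ZMod (2*h+1)) - a)*2)
  rcases Nat.lt_or_ge ((((h:ZMod (2*h+1)) - a)*2).val) (2*h) with hlt | hge
  · exact hlt
  · exfalso
    apply ha
    apply t_eq_zero h
    have hv : (((h:ZMod (2*h+1)) - a)*2).val = 2*h := by omega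
    have := ZMod.natCast_rightInverse (((h:ZMod (2*h+1)) - a)*2)
    rw [← this, hv, neg_one_cast]

lemma sweep (h : ℕ) (hh : 1 ≤ h) (a : ZMod (2*h+1)) (ha : a ≠ 0) :
    ∀ k : ℕ, k ≤ 2*h →
      (Phi h)^[k] (a, 0) =
        (a + (k : ZMod (2*h+1)) * (h : ZMod (2*h+1)) -
           (if (((h : ZMod (2*h+1)) - a) * 2).val < k then (h : ZMod (2*h+1)) else 0),
         (k : ZMod (2*h+1))) := by
  have hz := hzz h
  have hT := t_val_lt h ha
  intro k
  induction k with
  | zero => intro _; simp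
  | succ k IH =>
    intro hk1
    have hk : k ≤ 2*h := by omega
    rw [Function.iterate_succ_apply', IH hk]
    have hb : ((k : ℕ) : ZMod (2*h+1)) ≠ -1 := by
      intro e
      rw [← neg_one_cast h] at e
      have := castInj h (by omega) (by omega) e
      omega
    by_cases hadj : (((h : ZMod (2*h+1)) - a) * 2).val < k
    · rw [if_pos hadj]
      have hs : a + (k:ZMod (2*h+1)) * h - h + (k:ZMod (2*h+1)) ≠ (h : ZMod (2*h+1)) := by
        intro e
        have hkt : (((k+1 : ℕ)) : ZMod (2*h+1)) = ((h : ZMod (2*h+1)) - a) * 2 := by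
          push_cast
          linear_combination 2*e + (1 - (k:ZMod (2*h+1)))*hz
        have := congrArg ZMod.val hkt
        rw [ZMod.val_cast_of_lt (by omega)] at this
        omega
      simp only [Phi]
      rw [if_neg hb, if_neg hs, if_pos (show (((h : ZMod (2*h+1)) - a) * 2).val < k+1 by omega)]
      simp only [Prod.mk.injEq]
      refine ⟨by push_cast; ring, by push_cast; ring⟩
    · rw [if_neg hadj]
      have hTk : k ≤ (((h : ZMod (2*h+1)) - a) * 2).val := by omega
      by_cases heq : (((h : ZMod (2*h+1)) - a) * 2).val = k
      · have ht : ((h : ZMod (2*h+1)) - a) * 2 = ((k:ℕ) : ZMod (2*h+1)) := by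
          rw [← heq]
          exact (ZMod.natCast_rightInverse _).symm
        have hs : a + (k:ZMod (2*h+1)) * h - 0 + (k:ZMod (2*h+1)) = (h : ZMod (2*h+1)) := by
          linear_combination (-((h:ZMod (2*h+1))+1))*ht + ((h:ZMod (2*h+1)) - a)*hz
        simp only [Phi]
        rw [if_neg hb, if_pos hs, if_pos (show (((h : ZMod (2*h+1)) - a) * 2).val < k+1 by omega)]
        simp only [Prod.mk.injEq]
        refine ⟨by push_cast; ring, by push_cast; ring⟩
      · have hs : a + (k:ZMod (2*h+1)) * h - 0 + (k:ZMod (2*h+1)) ≠ (h : ZMod (2*h+1)) := by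
          intro e
          have hkt : ((k:ℕ) : ZMod (2*h+1)) = ((h : ZMod (2*h+1)) - a) * 2 := by
            linear_combination 2*e + (-(k:ZMod (2*h+1)))*hz
          have := congrArg ZMod.val hkt
          rw [ZMod.val_cast_of_lt (by omega)] at this
          omega
        simp only [Phi]
        rw [if_neg hb, if_neg hs, if_neg (show ¬ (((h : ZMod (2*h+1)) - a) * 2).val < k+1 by omega)]
        simp only [Prod.mk.injEq]
        refine ⟨by push_cast; ring, by push_cast; ring⟩

lemma col (h : ℕ) (hh : 1 ≤ h) (a : ZMod (2*h+1)) (ha : a ≠ 0) :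
    (Phi h)^[2*h+1] (a, 0) = ((if a + 1 = 0 then 1 else a + 1), 0) := by
  have hz := hzz h
  have hT := t_val_lt h ha
  rw [Function.iterate_succ_apply', sweep h hh a ha (2*h) le_rfl, if_pos hT]
  have hval : a + ((2*h : ℕ) : ZMod (2*h+1)) * h - h = a + 1 := by
    push_cast
    linear_combination ((h:ZMod (2*h+1)) - 1)*hz
  rw [hval]
  simp only [Function.iterate_one, Phi]
  rw [if_pos (neg_one_cast h)]
  by_cases h0 : a + 1 = 0
  · rw [if_pos h0, if_pos h0]
  · rw [if_neg h0, if_neg h0]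

lemma colIter (h : ℕ) (hh : 1 ≤ h) :
    ∀ j : ℕ, j ≤ 2*h - 1 →
      (Phi h)^[(2*h+1)*j] (1, 0) = (((1+j : ℕ) : ZMod (2*h+1)), 0) := by
  intro j
  induction j with
  | zero => intro _; norm_num
  | succ j IH =>
    intro hj
    have hj' : j ≤ 2*h - 1 := by omega
    rw [show (2*h+1)*(j+1) = (2*h+1) + (2*h+1)*j from by ring,
      Function.iterate_add_apply, IH hj']
    have hne : ((1+j : ℕ) : ZMod (2*h+1)) ≠ 0 := cast_ne_zero h (by omega) (by omega)
    rw [col h hh _ hne]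
    have h1 : ((1+j : ℕ) : ZMod (2*h+1)) + 1 = ((1+(j+1) : ℕ) : ZMod (2*h+1)) := by
      push_cast; ring
    rw [h1, if_neg (cast_ne_zero h (by omega) (by omega))]

lemma period1 (h : ℕ) (hh : 1 ≤ h) :
    (Phi h)^[(2*h+1)*(2*h)] (1, 0) = ((1 : ZMod (2*h+1)), 0) := by
  have key : (2*h+1)*(2*h) = (2*h+1) + (2*h+1)*(2*h-1) := by
    obtain ⟨j, hj⟩ : ∃ j, 2*h = j+1 := ⟨2*h-1, by omega⟩
    rw [hj, Nat.add_sub_cancel]; ring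
  rw [key, Function.iterate_add_apply, colIter h hh (2*h-1) le_rfl]
  have hne : ((1+(2*h-1) : ℕ) : ZMod (2*h+1)) ≠ 0 := cast_ne_zero h (by omega) (by omega)
  rw [col h hh _ hne]
  have h1 : ((1+(2*h-1) : ℕ) : ZMod (2*h+1)) + 1 = 0 := by
    rw [show 1+(2*h-1) = 2*h from by omega, neg_one_cast h]
    ring
  rw [if_pos h1]

lemma startReach (h : ℕ) (hh : 1 ≤ h) (a : ZMod (2*h+1)) (ha : a ≠ 0) :
    ∃ j ≤ 2*h - 1, (Phi h)^[(2*h+1)*j] (1, 0) = (a, 0) := by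
  have hv1 : 1 ≤ a.val := by
    rcases Nat.eq_zero_or_pos a.val with h0 | h1
    · exact absurd ((ZMod.val_eq_zero a).mp h0) ha
    · exact h1
  have hv2 : a.val < 2*h+1 := ZMod.val_lt a
  refine ⟨a.val - 1, by omega, ?_⟩
  rw [colIter h hh (a.val - 1) (by omega), show 1 + (a.val - 1) = a.val from by omega,
    ZMod.natCast_rightInverse a]

lemma reach (h : ℕ) (hh : 1 ≤ h) (q : ZMod (2*h+1) × ZMod (2*h+1)) (hq : q.1 + q.2 ≠ 0) :
    ∃ k < (2*h+1)*(2*h), (Phi h)^[k] (1, 0) = q := by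
  have hz := hzz h
  obtain ⟨q1, q2⟩ := q
  replace hq : q1 + q2 ≠ 0 := hq
  have hk'lt : q2.val < 2*h+1 := ZMod.val_lt q2
  have hK : ((q2.val : ℕ) : ZMod (2*h+1)) = q2 := ZMod.natCast_rightInverse q2
  suffices hP : ∃ a : ZMod (2*h+1), a ≠ 0 ∧ (Phi h)^[q2.val] (a, 0) = (q1, q2) by
    obtain ⟨a, ha, hstep⟩ := hP
    obtain ⟨j, hj, hcol⟩ := startReach h hh a ha
    have hmul : (2*h+1)*j ≤ (2*h+1)*(2*h-1) := Nat.mul_le_mul_left _ hj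
    have h2 : (2*h+1)*(2*h-1) + (2*h+1) = (2*h+1)*(2*h) := by
      obtain ⟨i, hi⟩ : ∃ i, 2*h = i+1 := ⟨2*h-1, by omega⟩
      rw [hi, Nat.add_sub_cancel]; ring
    refine ⟨q2.val + (2*h+1)*j, by omega, ?_⟩
    rw [Function.iterate_add_apply, hcol, hstep]
  by_cases h0 : q1 - q2 * (h : ZMod (2*h+1)) = 0
  · -- column start is (h : ZMod)
    have hane : (h : ZMod (2*h+1)) ≠ 0 := cast_ne_zero h (by omega) (by omega)
    have hk'pos : 0 < q2.val := by
      rcases Nat.eq_zero_or_pos q2.val with he | hp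
      · exfalso
        have hq2 : q2 = 0 := by rw [← hK, he]; simp
        apply hq
        rw [hq2] at h0 ⊢
        have : q1 = 0 := by linear_combination h0
        rw [this]; ring
      · exact hp
    refine ⟨(h : ZMod (2*h+1)), hane, ?_⟩
    rw [sweep h hh _ hane q2.val (by omega)]
    have hc : (((h:ZMod (2*h+1)) - (h:ZMod (2*h+1)))*2).val < q2.val := by
      have hv : ((h:ZMod (2*h+1)) - (h:ZMod (2*h+1)))*2 = 0 := by ring
      rw [hv, ZMod.val_zero]
      exact hk'pos
    rw [if_pos hc]
    simp only [Prod.mk.injEq]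
    refine ⟨?_, hK⟩
    rw [hK]
    linear_combination -h0
  · have hT1 := t_val_lt h h0
    by_cases hc1 : q2.val ≤ (((h:ZMod (2*h+1)) - (q1 - q2 * (h : ZMod (2*h+1))))*2).val
    · refine ⟨_, h0, ?_⟩
      rw [sweep h hh _ h0 q2.val (by omega), if_neg (by omega)]
      simp only [Prod.mk.injEq]
      refine ⟨?_, hK⟩
      rw [hK]; ring
    · push_neg at hc1
      have hgap : (((h:ZMod (2*h+1)) - (q1 - q2 * (h : ZMod (2*h+1))))*2).val + 1 ≠ q2.val := by
        intro e
        apply hq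
        have h2 := ZMod.natCast_rightInverse (((h:ZMod (2*h+1)) - (q1 - q2 * (h : ZMod (2*h+1))))*2)
        have h1 : ((h:ZMod (2*h+1)) - (q1 - q2 * (h : ZMod (2*h+1))))*2 + 1 = q2 := by
          rw [← h2, show ((((((h:ZMod (2*h+1)) - (q1 - q2 * (h : ZMod (2*h+1))))*2).val : ℕ)
            : ZMod (2*h+1)) + 1)
            = (((((h:ZMod (2*h+1)) - (q1 - q2 * (h : ZMod (2*h+1))))*2).val + 1 : ℕ)
            : ZMod (2*h+1)) from by push_cast; ring, e, hK]
        apply two_mul_cancel h (x := q1 + q2) (y := 0)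
        linear_combination -h1 + (1 + q2)*hz
      have hT1k : (((h:ZMod (2*h+1)) - (q1 - q2 * (h : ZMod (2*h+1))))*2).val + 1 < q2.val := by
        omega
      have h2 := ZMod.natCast_rightInverse (((h:ZMod (2*h+1)) - (q1 - q2 * (h : ZMod (2*h+1))))*2)
      have ht2 : ((h:ZMod (2*h+1)) - (q1 - q2 * (h : ZMod (2*h+1)) + h))*2
          = (((((h:ZMod (2*h+1)) - (q1 - q2 * (h : ZMod (2*h+1))))*2).val + 1 : ℕ)
            : ZMod (2*h+1)) := by
        push_cast
        linear_combination -h2 - hz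
      have ha2 : q1 - q2 * (h : ZMod (2*h+1)) + h ≠ 0 := by
        intro e
        rw [e] at ht2
        have he2 : ((2*h : ℕ) : ZMod (2*h+1))
            = (((((h:ZMod (2*h+1)) - (q1 - q2 * (h : ZMod (2*h+1))))*2).val + 1 : ℕ)
              : ZMod (2*h+1)) := by
          rw [← ht2]; push_cast; ring
        have := castInj h (by omega) (by omega) he2
        omega
      refine ⟨_, ha2, ?_⟩
      rw [sweep h hh _ ha2 q2.val (by omega)]
      have hcv : (((h:ZMod (2*h+1)) - (q1 - q2 * (h : ZMod (2*h+1)) + h))*2).val < q2.val := by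
        rw [ht2, ZMod.val_cast_of_lt (by omega)]
        omega
      rw [if_pos hcv]
      simp only [Prod.mk.injEq]
      refine ⟨?_, hK⟩
      rw [hK]; ring

lemma inv1 (h : ℕ) (hh : 1 ≤ h) (p : ZMod (2*h+1) × ZMod (2*h+1))
    (hp : p.1 + p.2 ≠ 0) : (Phi h p).1 + (Phi h p).2 ≠ 0 := by
  have hz := hzz h
  haveI : Fact (1 < 2*h+1) := ⟨by omega⟩
  obtain ⟨x, y⟩ := p
  replace hp : x + y ≠ 0 := hp
  simp only [Phi]
  by_cases hy : y = -1
  · rw [if_pos hy]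
    by_cases hx : x = 0
    · rw [if_pos hx]
      show (1 : ZMod (2*h+1)) + 0 ≠ 0
      simpa using one_ne_zero
    · rw [if_neg hx]
      show x + 0 ≠ 0
      simpa using hx
  · rw [if_neg hy]
    by_cases hs : x + y = (h : ZMod (2*h+1))
    · rw [if_pos hs]
      show x + (y + 1) ≠ 0
      intro e
      have : ((h+1 : ℕ) : ZMod (2*h+1)) = 0 := by
        push_cast
        linear_combination e - hs
      exact cast_ne_zero h (by omega) (by omega) this
    · rw [if_neg hs]
      show x + (h : ZMod (2*h+1)) + (y + 1) ≠ 0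
      intro e
      apply hs
      linear_combination e - hz

lemma invIter (h : ℕ) (hh : 1 ≤ h) : ∀ (k : ℕ) (p : ZMod (2*h+1) × ZMod (2*h+1)),
    p.1 + p.2 ≠ 0 → ((Phi h)^[k] p).1 + ((Phi h)^[k] p).2 ≠ 0 := by
  intro k
  induction k with
  | zero => intro p hp; simpa using hp
  | succ k IH =>
    intro p hp
    rw [Function.iterate_succ_apply']
    exact inv1 h hh _ (IH p hp)

lemma cardSigma (h : ℕ) :
    Fintype.card {p : ZMod (2*h+1) × ZMod (2*h+1) // p.1 + p.2 ≠ 0} = (2*h+1)*(2*h) := by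
  have e : {p : ZMod (2*h+1) × ZMod (2*h+1) // p.1 + p.2 ≠ 0} ≃
      (ZMod (2*h+1)) × {x : ZMod (2*h+1) // ¬ (x = 0)} :=
    { toFun := fun p => (p.1.2, ⟨p.1.1 + p.1.2, p.2⟩)
      invFun := fun x => ⟨(x.2.1 - x.1, x.1), by
        show x.2.1 - x.1 + x.1 ≠ 0
        simpa using x.2.2⟩
      left_inv := fun p => by
        apply Subtype.ext
        simp [Prod.ext_iff]
      right_inv := fun x => by
        simp [Prod.ext_iff, Subtype.ext_iff] }
  rw [Fintype.card_congr e, Fintype.card_prod, ZMod.card, Fintype.card_subtype_compl,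
    Fintype.card_subtype_eq, ZMod.card, Nat.add_sub_cancel]

/-- **The induced map is one cycle.** For `m = 2h+1 ≥ 5`, `Φ` is a single cycle of length
`m(m−1)` on `Σ = {(a,b) : a + b ≠ 0}`. -/
theorem Phi_single_cycle (h : ℕ) (hh : 2 ≤ h) :
    (∀ p : ZMod (2 * h + 1) × ZMod (2 * h + 1), p.1 + p.2 ≠ 0 →
        (Phi h p).1 + (Phi h p).2 ≠ 0) ∧
    (∀ p : ZMod (2 * h + 1) × ZMod (2 * h + 1), p.1 + p.2 ≠ 0 →
        Function.minimalPeriod (Phi h) p = (2 * h + 1) * (2 * h)) ∧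
    (∀ p q : ZMod (2 * h + 1) × ZMod (2 * h + 1), p.1 + p.2 ≠ 0 → q.1 + q.2 ≠ 0 →
        ∃ k : ℕ, (Phi h)^[k] p = q) := by
  have hh1 : 1 ≤ h := by omega
  have reachFrom : ∀ p q : ZMod (2*h+1) × ZMod (2*h+1), p.1 + p.2 ≠ 0 → q.1 + q.2 ≠ 0 →
      ∃ k, (Phi h)^[k] p = q := by
    intro p q hp hq
    obtain ⟨i, hilt, hi⟩ := reach h hh1 p hp
    obtain ⟨j, hjlt, hj⟩ := reach h hh1 q hq
    refine ⟨j + ((2*h+1)*(2*h) - i), ?_⟩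
    have h1 : (Phi h)^[(2*h+1)*(2*h) - i] p = (1, 0) := by
      rw [← hi, ← Function.iterate_add_apply, Nat.sub_add_cancel (le_of_lt hilt),
        period1 h hh1]
    rw [Function.iterate_add_apply, h1, hj]
  have periodic : ∀ p : ZMod (2*h+1) × ZMod (2*h+1), p.1 + p.2 ≠ 0 →
      (Phi h)^[(2*h+1)*(2*h)] p = p := by
    intro p hp
    obtain ⟨i, hilt, hi⟩ := reach h hh1 p hp
    rw [← hi, ← Function.iterate_add_apply,
      show (2*h+1)*(2*h) + i = i + (2*h+1)*(2*h) from Nat.add_comm _ _,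
      Function.iterate_add_apply, period1 h hh1]
  refine ⟨fun p hp => inv1 h hh1 p hp, ?_, fun p q hp hq => reachFrom p q hp hq⟩
  intro p hp
  have hnpos : 0 < (2*h+1)*(2*h) := Nat.mul_pos (by omega) (by omega)
  have hper : Function.IsPeriodicPt (Phi h) ((2*h+1)*(2*h)) p := periodic p hp
  have hdvd : Function.minimalPeriod (Phi h) p ∣ (2*h+1)*(2*h) := hper.minimalPeriod_dvd
  have hdpos : 0 < Function.minimalPeriod (Phi h) p := hper.minimalPeriod_pos hnpos
  have hge : (2*h+1)*(2*h) ≤ Function.minimalPeriod (Phi h) p := by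
    have hsurj : Function.Surjective (fun i : Fin (Function.minimalPeriod (Phi h) p) =>
        (⟨(Phi h)^[i.val] p, invIter h hh1 i.val p hp⟩ :
          {q : ZMod (2*h+1) × ZMod (2*h+1) // q.1 + q.2 ≠ 0})) := by
      rintro ⟨q, hq⟩
      obtain ⟨k, hk⟩ := reachFrom p q hp hq
      refine ⟨⟨k % Function.minimalPeriod (Phi h) p, Nat.mod_lt _ hdpos⟩, ?_⟩
      apply Subtype.ext
      show (Phi h)^[k % Function.minimalPeriod (Phi h) p] p = q
      rw [Function.iterate_mod_minimalPeriod_eq, hk]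
    have := Fintype.card_le_of_surjective _ hsurj
    rwa [Fintype.card_fin, cardSigma h] at this
  exact Nat.le_antisymm (Nat.le_of_dvd hnpos hdvd) hge
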